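/- arXiv:2001.00399 — 3 statements merged into one kernel-verified Lean document; each statement's English description precedes it below -/
import Mathlib

section
/- For nonnegative integers a, b, f with b ≤ f ≤ a and integer q ≥ 2, the ratio of Gaussian binomial coefficients satisfies q^((a-f-1)·b) ≤ [a choose b]_q / [f choose b]_q ≤ q^((a-f+1)·b). -/
/-- The Gaussian (q-)binomial coefficient `[a choose b]_q`, as a rational number. -/
noncomputable def gaussBinom (q a b : ℕ) : ℚ :=
  ∏ i ∈ Finset.range b, ((q : ℚ) ^ (a - i) - 1) / ((q : ℚ) ^ (b - i) - 1)

/-! Both coefficients share the denominator `∏ (q^(b-i) - 1)`, so their ratio is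
`∏_{i<b} (q^(a-i) - 1) / (q^(f-i) - 1)`, and each factor `(q^(l+d) - 1) / (q^l - 1)` with
`d = a - f` lies between `q^d` and `q^(d+1)`. -/

open Finset

section GeomRatio

variable {K : Type*} [Field K] [LinearOrder K] [IsStrictOrderedRing K] {Q : K} {l : ℕ}

theorem pow_le_pow_add_sub_one_div (hQ : 1 < Q) (hl : l ≠ 0) (d : ℕ) :
    Q ^ d ≤ (Q ^ (l + d) - 1) / (Q ^ l - 1) := by
  have hden : 0 < Q ^ l - 1 := sub_pos.mpr (one_lt_pow₀ hQ hl)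
  rw [le_div_iff₀ hden, pow_add]
  nlinarith [one_le_pow₀ (n := d) hQ.le]

theorem pow_add_sub_one_div_le_pow_succ (hQ : 2 ≤ Q) (hl : l ≠ 0) (d : ℕ) :
    (Q ^ (l + d) - 1) / (Q ^ l - 1) ≤ Q ^ (d + 1) := by
  have hQ1 : 1 < Q := by linarith
  have hden : 0 < Q ^ l - 1 := sub_pos.mpr (one_lt_pow₀ hQ1 hl)
  rw [div_le_iff₀ hden]
  -- `Q^(d+1) ≤ Q^(l+d)` and `Q - 1 ≥ 1` give `Q^(d+1) - 1 ≤ Q^(l+d) (Q - 1)`.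
  have hmono : Q ^ (d + 1) ≤ Q ^ (l + d) := pow_le_pow_right₀ hQ1.le (by omega)
  have hpos : 0 ≤ Q ^ (l + d) := by positivity
  have hexpand : Q ^ (d + 1) * Q ^ l = Q ^ (l + d) * Q := by ring
  nlinarith

end GeomRatio

theorem gaussBinom_div_gaussBinom {q : ℕ} (hq : 1 < q) (a f b : ℕ) :
    gaussBinom q a b / gaussBinom q f b =
      ∏ i ∈ range b, ((q : ℚ) ^ (a - i) - 1) / ((q : ℚ) ^ (f - i) - 1) := by
  rw [gaussBinom, gaussBinom, ← prod_div_distrib]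
  refine prod_congr rfl fun i hi => ?_
  have hden : (q : ℚ) ^ (b - i) - 1 ≠ 0 :=
    sub_ne_zero.mpr (one_lt_pow₀ (by exact_mod_cast hq) (by simp at hi; omega)).ne'
  rw [div_div_div_cancel_right₀ hden]

theorem pow_le_gaussBinom_div {q a b f : ℕ} (hq : 1 < q) (hbf : b ≤ f) (hfa : f ≤ a) :
    (q : ℚ) ^ ((a - f) * b) ≤ gaussBinom q a b / gaussBinom q f b := by
  rw [gaussBinom_div_gaussBinom hq, pow_mul, pow_eq_prod_const]
  refine prod_le_prod (fun _ _ => by positivity) fun i hi => ?_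
  rw [mem_range] at hi
  rw [show a - i = (f - i) + (a - f) by omega]
  exact pow_le_pow_add_sub_one_div (by exact_mod_cast hq) (by omega) _

theorem gaussBinom_div_le_pow {q a b f : ℕ} (hq : 2 ≤ q) (hbf : b ≤ f) (hfa : f ≤ a) :
    gaussBinom q a b / gaussBinom q f b ≤ (q : ℚ) ^ ((a - f + 1) * b) := by
  have hQ : (2 : ℚ) ≤ q := by exact_mod_cast hq
  rw [gaussBinom_div_gaussBinom hq, pow_mul, pow_eq_prod_const]
  refine prod_le_prod (fun _ _ => ?_) fun i hi => ?_
  · exact div_nonneg (sub_nonneg.mpr (one_le_pow₀ (by linarith)))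
      (sub_nonneg.mpr (one_le_pow₀ (by linarith)))
  · rw [mem_range] at hi
    rw [show a - i = (f - i) + (a - f) by omega]
    exact pow_add_sub_one_div_le_pow_succ hQ (by omega) _

theorem gaussBinom_ratio_bounds (q a b f : ℕ) (hq : 2 ≤ q) (hbf : b ≤ f) (hfa : f ≤ a) :
    (q : ℚ) ^ (((a : ℤ) - f - 1) * b) ≤ gaussBinom q a b / gaussBinom q f b ∧
      gaussBinom q a b / gaussBinom q f b ≤ (q : ℚ) ^ (((a : ℤ) - f + 1) * b) := by
  have hQ : (1 : ℚ) ≤ q := by exact_mod_cast (by omega : 1 ≤ q)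
  have hcast : ((a - f : ℕ) : ℤ) = a - f := by omega
  constructor
  · calc (q : ℚ) ^ (((a : ℤ) - f - 1) * b)
        ≤ (q : ℚ) ^ ((((a - f) * b : ℕ)) : ℤ) := by
          refine zpow_le_zpow_right₀ hQ ?_
          push_cast [hcast]
          nlinarith [(Nat.cast_nonneg b : (0 : ℤ) ≤ b)]
      _ = (q : ℚ) ^ ((a - f) * b) := zpow_natCast _ _
      _ ≤ _ := pow_le_gaussBinom_div (by omega) hbf hfa
  · calc gaussBinom q a b / gaussBinom q f b
        ≤ (q : ℚ) ^ ((a - f + 1) * b) := gaussBinom_div_le_pow hq hbf hfa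
      _ = (q : ℚ) ^ (((a : ℤ) - f + 1) * b) := by
          rw [← zpow_natCast]
          push_cast [hcast]
          ring
end

section
/- Let B be a bipartite graph with left vertex set the n-element linearly independent sets of 1-dimensional subspaces of F_q^k, right vertex set the m-element linearly independent sets, and edges {X, Y} whenever X ∪ Y is an (n+m)-element linearly independent set. For each (n+m)-element linearly independent set Z, the edge set C_Z = {{X, Z\X} : X ⊆ Z, |X| = n} is an induced matching of B of size C(n+m, n), and the family {C_Z} over all such Z partitions the edge set of B. -/
variable (𝔽 : Type*) [Field 𝔽] (k : ℕ) [DecidableEq (Submodule 𝔽 (Fin k → 𝔽))]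

/-- `s` is an `r`-element set of 1-dimensional subspaces of `F_q^k` whose sum has dimension `r`
(i.e. a linearly independent set of lines). -/
def LinIndSet (r : ℕ) (s : Finset (Submodule 𝔽 (Fin k → 𝔽))) : Prop :=
  s.card = r ∧ (∀ T ∈ s, Module.finrank 𝔽 T = 1) ∧
    Module.finrank 𝔽 ((s.sup id : Submodule 𝔽 (Fin k → 𝔽)) : Type _) = r

/-- The edge set of the bipartite graph `B`: pairs `(X, Y)` of a linearly independent `n`-set
and `m`-set of lines whose union is a linearly independent `(n+m)`-set. -/
def edgeSetB (n m : ℕ) :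
    Set (Finset (Submodule 𝔽 (Fin k → 𝔽)) × Finset (Submodule 𝔽 (Fin k → 𝔽))) :=
  {p | LinIndSet 𝔽 k n p.1 ∧ LinIndSet 𝔽 k m p.2 ∧ LinIndSet 𝔽 k (n + m) (p.1 ∪ p.2)}

/-- The candidate induced matching `C_Z = {(X, Z \ X) : X ⊆ Z, |X| = n}`. -/
def matchingCZ (n : ℕ) (Z : Finset (Submodule 𝔽 (Fin k → 𝔽))) :
    Set (Finset (Submodule 𝔽 (Fin k → 𝔽)) × Finset (Submodule 𝔽 (Fin k → 𝔽))) :=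
  {p | p.1 ⊆ Z ∧ p.1.card = n ∧ p.2 = Z \ p.1}

/-! The only linear algebra involved: each line adds at most one dimension to a span, so every
subfamily of a linearly independent family of lines is again linearly independent. The rest is
bookkeeping with finite sets. An edge `(X, Y)` lies in `C_Z` exactly when `Z = X ∪ Y`, which
gives the partition. A cross pair `(X₁, Z \ X₂)` can only be an edge if its union, a subset of `Z`
of full size, is `Z` itself; then `Z \ X₂ = Z \ X₁`, so the two matching edges coincide. -/

namespace Submodule

variable {K V : Type*} [DivisionRing K] [AddCommGroup V] [Module K V] [FiniteDimensional K V]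

theorem finrank_finset_sup_le_sum (s : Finset (Submodule K V)) :
    Module.finrank K (s.sup id : Submodule K V) ≤ ∑ T ∈ s, Module.finrank K T := by
  induction s using Finset.cons_induction with
  | empty => simp
  | cons a s _ ih =>
    rw [Finset.sup_cons, Finset.sum_cons]
    exact (finrank_add_le_finrank_add_finrank _ _).trans (Nat.add_le_add_left ih _)

theorem finrank_finset_sup_le_card {s : Finset (Submodule K V)}
    (hs : ∀ T ∈ s, Module.finrank K T = 1) :
    Module.finrank K (s.sup id : Submodule K V) ≤ s.card :=
  calc _ ≤ ∑ T ∈ s, Module.finrank K T := finrank_finset_sup_le_sum s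
    _ = s.card := by rw [Finset.card_eq_sum_ones]; exact Finset.sum_congr rfl hs

end Submodule

section

variable {𝔽 k}

theorem LinIndSet.subset {r : ℕ} {Z X : Finset (Submodule 𝔽 (Fin k → 𝔽))}
    (hZ : LinIndSet 𝔽 k r Z) (hX : X ⊆ Z) : LinIndSet 𝔽 k X.card X := by
  obtain ⟨hcard, hlines, hrank⟩ := hZ
  refine ⟨rfl, fun T hT => hlines T (hX hT), le_antisymm ?_ ?_⟩
  · exact Submodule.finrank_finset_sup_le_card fun T hT => hlines T (hX hT)
  · have hsplit : Z.sup id = X.sup id ⊔ (Z \ X).sup id := by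
      rw [← Finset.sup_union, Finset.union_sdiff_of_subset hX]
    have hrest := Submodule.finrank_finset_sup_le_card
      fun T (hT : T ∈ Z \ X) => hlines T (Finset.sdiff_subset hT)
    have hZ_le := Submodule.finrank_add_le_finrank_add_finrank (X.sup id) ((Z \ X).sup id)
    rw [← hsplit, hrank, ← hcard, ← Finset.card_sdiff_add_card_eq_card hX] at hZ_le
    omega

variable {n : ℕ} {Z : Finset (Submodule 𝔽 (Fin k → 𝔽))}
  {p p₁ p₂ : Finset (Submodule 𝔽 (Fin k → 𝔽)) × Finset (Submodule 𝔽 (Fin k → 𝔽))}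

theorem union_eq_of_mem_matchingCZ (hp : p ∈ matchingCZ 𝔽 k n Z) : p.1 ∪ p.2 = Z := by
  rw [hp.2.2, Finset.union_sdiff_of_subset hp.1]

theorem card_snd_of_mem_matchingCZ (hp : p ∈ matchingCZ 𝔽 k n Z) : p.2.card = Z.card - n := by
  rw [hp.2.2, Finset.card_sdiff_of_subset hp.1, hp.2.1]

theorem eq_of_fst_eq_of_mem_matchingCZ (h₁ : p₁ ∈ matchingCZ 𝔽 k n Z)
    (h₂ : p₂ ∈ matchingCZ 𝔽 k n Z) (h : p₁.1 = p₂.1) : p₁ = p₂ :=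
  Prod.ext h (by rw [h₁.2.2, h₂.2.2, h])

theorem eq_of_snd_eq_of_mem_matchingCZ (h₁ : p₁ ∈ matchingCZ 𝔽 k n Z)
    (h₂ : p₂ ∈ matchingCZ 𝔽 k n Z) (h : p₁.2 = p₂.2) : p₁ = p₂ := by
  refine eq_of_fst_eq_of_mem_matchingCZ h₁ h₂ ?_
  rw [← Finset.sdiff_sdiff_eq_self h₁.1, ← Finset.sdiff_sdiff_eq_self h₂.1, ← h₁.2.2, ← h₂.2.2,
    h]

theorem matchingCZ_eq_image_powersetCard :
    matchingCZ 𝔽 k n Z = (fun X => (X, Z \ X)) '' (Z.powersetCard n : Set _) := by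
  ext ⟨X, Y⟩
  simp only [matchingCZ, Set.mem_ofPred_eq, Set.mem_image, Finset.mem_coe,
    Finset.mem_powersetCard, Prod.mk.injEq]
  constructor
  · rintro ⟨hXZ, hX, rfl⟩
    exact ⟨X, ⟨hXZ, hX⟩, rfl, rfl⟩
  · rintro ⟨X, hX, rfl, rfl⟩
    exact ⟨hX.1, hX.2, rfl⟩

theorem ncard_matchingCZ : (matchingCZ 𝔽 k n Z).ncard = Z.card.choose n := by
  rw [matchingCZ_eq_image_powersetCard,
    Set.ncard_image_of_injective _ fun _ _ h => congrArg Prod.fst h, Set.ncard_coe_finset,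
    Finset.card_powersetCard]

variable {m : ℕ}

theorem disjoint_of_mem_edgeSetB (hp : p ∈ edgeSetB 𝔽 k n m) : Disjoint p.1 p.2 := by
  rw [← Finset.card_union_eq_card_add_card, hp.1.1, hp.2.1.1, hp.2.2.1]

theorem mem_matchingCZ_union_of_mem_edgeSetB (hp : p ∈ edgeSetB 𝔽 k n m) :
    p ∈ matchingCZ 𝔽 k n (p.1 ∪ p.2) :=
  ⟨Finset.subset_union_left, hp.1.1,
    (Finset.union_sdiff_cancel_left (disjoint_of_mem_edgeSetB hp)).symm⟩

theorem matchingCZ_subset_edgeSetB (hZ : LinIndSet 𝔽 k (n + m) Z) :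
    matchingCZ 𝔽 k n Z ⊆ edgeSetB 𝔽 k n m := by
  intro p hp
  have hX := hZ.subset hp.1
  have hY := hZ.subset (hp.2.2 ▸ Finset.sdiff_subset : p.2 ⊆ Z)
  rw [hp.2.1] at hX
  rw [card_snd_of_mem_matchingCZ hp, hZ.1, Nat.add_sub_cancel_left] at hY
  exact ⟨hX, hY, (union_eq_of_mem_matchingCZ hp).symm ▸ hZ⟩

theorem eq_of_mem_matchingCZ_of_mem_edgeSetB (hZ : Z.card = n + m)
    (h₁ : p₁ ∈ matchingCZ 𝔽 k n Z) (h₂ : p₂ ∈ matchingCZ 𝔽 k n Z)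
    (h : (p₁.1, p₂.2) ∈ edgeSetB 𝔽 k n m) : p₁ = p₂ := by
  have hsub : p₁.1 ∪ p₂.2 ⊆ Z :=
    Finset.union_subset h₁.1 (h₂.2.2 ▸ Finset.sdiff_subset)
  have hunion : p₁.1 ∪ p₂.2 = Z :=
    Finset.eq_of_subset_of_card_le hsub (by rw [hZ, h.2.2.1])
  refine eq_of_snd_eq_of_mem_matchingCZ h₁ h₂ ?_
  rw [h₁.2.2, ← hunion]
  exact Finset.union_sdiff_cancel_left (disjoint_of_mem_edgeSetB h)

end

theorem matchingCZ_induced_matching_cover (n m : ℕ) :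
    (∀ Z : Finset (Submodule 𝔽 (Fin k → 𝔽)), LinIndSet 𝔽 k (n + m) Z →
      matchingCZ 𝔽 k n Z ⊆ edgeSetB 𝔽 k n m ∧
      (matchingCZ 𝔽 k n Z).ncard = Nat.choose (n + m) n ∧
      (∀ p₁ ∈ matchingCZ 𝔽 k n Z, ∀ p₂ ∈ matchingCZ 𝔽 k n Z, p₁ ≠ p₂ →
        p₁.1 ≠ p₂.1 ∧ p₁.2 ≠ p₂.2 ∧
        (p₁.1, p₂.2) ∉ edgeSetB 𝔽 k n m ∧ (p₂.1, p₁.2) ∉ edgeSetB 𝔽 k n m)) ∧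
    (∀ p ∈ edgeSetB 𝔽 k n m,
      ∃! Z : Finset (Submodule 𝔽 (Fin k → 𝔽)),
        LinIndSet 𝔽 k (n + m) Z ∧ p ∈ matchingCZ 𝔽 k n Z) := by
  refine ⟨fun Z hZ => ⟨matchingCZ_subset_edgeSetB hZ, ?_, ?_⟩, fun p hp => ?_⟩
  · rw [ncard_matchingCZ, hZ.1]
  · intro p₁ h₁ p₂ h₂ hne
    exact ⟨fun h => hne (eq_of_fst_eq_of_mem_matchingCZ h₁ h₂ h),
      fun h => hne (eq_of_snd_eq_of_mem_matchingCZ h₁ h₂ h),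
      fun h => hne (eq_of_mem_matchingCZ_of_mem_edgeSetB hZ.1 h₁ h₂ h),
      fun h => hne (eq_of_mem_matchingCZ_of_mem_edgeSetB hZ.1 h₂ h₁ h).symm⟩
  · exact ⟨p.1 ∪ p.2, ⟨hp.2.2, mem_matchingCZ_union_of_mem_edgeSetB hp⟩,
      fun Z hZ => (union_eq_of_mem_matchingCZ hZ.2).symm⟩
end

section
/- Let B be a bi-regular bipartite graph with K left vertices of degree D and F right vertices of degree d (so KD = Fd). Then there exist left vertices k_1, k_2, ..., k_d and nested neighborhood sets N_1 ⊇ N_2 ⊇ ⋯ ⊇ N_d of right vertices with k_j adjacent to every vertex of N_j, such that |N_1| = D and |N_j| ≥ ⌈(d − (j−1))·|N_{j−1}| / (K − (j−1))⌉ for 2 ≤ j ≤ d. -/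
/-!
Choose the left vertices greedily. If `S` is the set of the `j` left vertices chosen so far and
`N` the current set of common neighbours, every right vertex of `N` has at least `d - j`
neighbours outside `S`, so double counting the edges between `N` and the `K - j` left vertices
outside `S` yields one of them adjacent to at least a `(d - j) / (K - j)` fraction of `N`.
-/

section

open Finset Function

variable {α β : Type*} [Fintype α] (r : α → β → Prop) [∀ a b, Decidable (r a b)]

lemma sub_card_le_card_bipartiteBelow_compl [DecidableEq α] {d : ℕ} {b : β}
    (hd : d ≤ #(univ.bipartiteBelow r b)) (S : Finset α) : d - #S ≤ #(Sᶜ.bipartiteBelow r b) := by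
  have hsdiff : Sᶜ.bipartiteBelow r b = univ.bipartiteBelow r b \ S := by
    ext a; simp [mem_bipartiteBelow, and_comm]
  rw [hsdiff]
  exact (Nat.sub_le_sub_right hd _).trans (le_card_sdiff _ _)

lemma exists_notMem_card_mul_le_mul_card_bipartiteAbove [DecidableEq α] {d : ℕ}
    (hd : ∀ b, d ≤ #(univ.bipartiteBelow r b)) {S : Finset α} (hS : Sᶜ.Nonempty)
    (N : Finset β) :
    ∃ a ∉ S, #N * (d - #S) ≤ (Fintype.card α - #S) * #(N.bipartiteAbove r a) := by
  obtain ⟨a, ha, hmax⟩ := Sᶜ.exists_max_image (fun a => #(N.bipartiteAbove r a)) hS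
  refine ⟨a, mem_compl.1 ha, ?_⟩
  rw [← card_compl]
  exact card_mul_le_card_mul' r (fun b _ => sub_card_le_card_bipartiteBelow_compl r (hd b) S) hmax

/-- The first `n` steps of the greedy construction, indexed from `0`: `ks j` and `Ns j` stand for
`k_{j+1}` and `N_{j+1}`, and their values at indices `≥ n` are irrelevant. -/
structure IsNestedNeighborhoodChain (D d n : ℕ) (ks : ℕ → α) (Ns : ℕ → Finset β) : Prop where
  injOn : Set.InjOn ks (Set.Iio n)
  adj : ∀ j < n, ∀ b ∈ Ns j, r (ks j) b
  subset_of_le : ∀ i j, i ≤ j → j < n → Ns j ⊆ Ns i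
  card_zero : #(Ns 0) = D
  card_le : ∀ j, 0 < j → j < n → (d - j) * #(Ns (j - 1)) ≤ (Fintype.card α - j) * #(Ns j)

namespace IsNestedNeighborhoodChain

variable {r}

lemma one [Fintype β] {D d : ℕ} (a : α) (hD : #(univ.bipartiteAbove r a) = D) :
    IsNestedNeighborhoodChain r D d 1 (fun _ => a) (fun _ => univ.bipartiteAbove r a) where
  injOn i hi j hj _ := by simp only [Set.mem_Iio] at hi hj; omega
  adj _ _ b hb := ((mem_bipartiteAbove r).1 hb).2
  subset_of_le _ _ _ _ := Subset.rfl
  card_zero := hD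
  card_le _ hj hj' := by omega

lemma extend [DecidableEq α] {D d n : ℕ} {ks : ℕ → α} {Ns : ℕ → Finset β}
    (h : IsNestedNeighborhoodChain r D d n ks Ns) (hd : ∀ b, d ≤ #(univ.bipartiteBelow r b))
    (hn : 0 < n) (hnK : n < Fintype.card α) :
    ∃ ks' Ns', IsNestedNeighborhoodChain r D d (n + 1) ks' Ns' := by
  set S := (range n).image ks
  have hS : #S = n := by
    rw [card_image_of_injOn (by simpa using h.injOn), card_range]
  have hSc : Sᶜ.Nonempty := by
    rw [← card_pos, card_compl]; omega
  obtain ⟨a, haS, hcard⟩ :=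
    exists_notMem_card_mul_le_mul_card_bipartiteAbove r hd hSc (Ns (n - 1))
  have ha : ∀ j < n, ks j ≠ a := fun j hj hja => haS (mem_image.2 ⟨j, mem_range.2 hj, hja⟩)
  have hks : ∀ j < n, update ks n a j = ks j := fun j hj => update_of_ne hj.ne _ _
  have hNs : ∀ j < n, update Ns n ((Ns (n - 1)).bipartiteAbove r a) j = Ns j :=
    fun j hj => update_of_ne hj.ne _ _
  have hlt : ∀ {j}, j < n + 1 → j < n ∨ j = n := fun hj => Nat.lt_succ_iff_lt_or_eq.1 hj
  refine ⟨update ks n a, update Ns n ((Ns (n - 1)).bipartiteAbove r a),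
    ⟨?_, ?_, ?_, ?_, ?_⟩⟩
  · intro i hi j hj hij
    rcases hlt hi with hi | rfl <;> rcases hlt hj with hj | rfl
    · rw [hks i hi, hks j hj] at hij; exact h.injOn hi hj hij
    · rw [hks i hi, update_self] at hij; exact absurd hij (ha i hi)
    · rw [hks j hj, update_self] at hij; exact absurd hij.symm (ha j hj)
    · rfl
  · intro j hj b hb
    rcases hlt hj with hj | rfl
    · rw [hNs j hj] at hb; rw [hks j hj]; exact h.adj j hj b hb
    · rw [update_self] at hb ⊢; exact ((mem_bipartiteAbove r).1 hb).2
  · intro i j hij hj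
    rcases hlt hj with hj | rfl
    · rw [hNs j hj, hNs i (hij.trans_lt hj)]; exact h.subset_of_le i j hij hj
    · rcases hij.lt_or_eq with hi | rfl
      · rw [hNs i hi, update_self]
        exact (filter_subset _ _).trans (h.subset_of_le i (j - 1) (by omega) (by omega))
      · exact Subset.rfl
  · rw [hNs 0 hn]; exact h.card_zero
  · intro j hj0 hj
    rcases hlt hj with hj | rfl
    · rw [hNs j hj, hNs (j - 1) (by omega)]; exact h.card_le j hj0 hj
    · rw [update_self, hNs (j - 1) (by omega), mul_comm]; rwa [hS] at hcard

end IsNestedNeighborhoodChain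

lemma exists_isNestedNeighborhoodChain [Fintype β] {D d n : ℕ}
    (hD : ∀ a, #(univ.bipartiteAbove r a) = D) (hd : ∀ b, d ≤ #(univ.bipartiteBelow r b))
    (hn : 0 < n) (hnK : n ≤ Fintype.card α) :
    ∃ ks Ns, IsNestedNeighborhoodChain r D d n ks Ns := by
  classical
  induction n, hn using Nat.le_induction with
  | base =>
    obtain ⟨a⟩ : Nonempty α := Fintype.card_pos_iff.1 hnK
    exact ⟨_, _, IsNestedNeighborhoodChain.one a (hD a)⟩
  | succ n hn ih =>
    obtain ⟨ks, Ns, h⟩ := ih (by omega)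
    exact h.extend hd hn hnK

lemma ceil_natCast_mul_div_le {k : Type*} [Field k] [LinearOrder k] [IsStrictOrderedRing k]
    [FloorRing k] {a b c x : ℕ} (hc : 0 < c) (h : a * b ≤ c * x) :
    ⌈(a * b : k) / c⌉ ≤ x := by
  rw [Int.ceil_le, div_le_iff₀ (by exact_mod_cast hc)]
  exact_mod_cast h.trans_eq (mul_comm _ _)

end

theorem nested_neighborhoods_of_biregular_general (α β : Type*) [Fintype α] [Fintype β]
    (r : α → β → Prop) [∀ a b, Decidable (r a b)]
    (K D d : ℕ) (hK : Fintype.card α = K)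
    (hD : ∀ a : α, (Finset.univ.filter fun b => r a b).card = D)
    (hd : ∀ b : β, (Finset.univ.filter fun a => r a b).card = d)
    (hdpos : 0 < d) (hdK : d ≤ K) :
    ∃ (ks : Fin d → α) (Ns : Fin d → Finset β),
      Function.Injective ks ∧
      (∀ j : Fin d, ∀ b ∈ Ns j, r (ks j) b) ∧
      (∀ j j' : Fin d, j ≤ j' → Ns j' ⊆ Ns j) ∧
      (Ns ⟨0, hdpos⟩).card = D ∧
      (∀ j : Fin d, 0 < j.val →
        (⌈(((d - j.val : ℕ) : ℚ) *
              ((Ns ⟨j.val - 1, Nat.lt_of_le_of_lt (Nat.sub_le _ _) j.isLt⟩).card : ℚ)) /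
            ((K - j.val : ℕ) : ℚ)⌉ : ℤ) ≤ ((Ns j).card : ℤ)) := by
  subst hK
  obtain ⟨ks, Ns, h⟩ :=
    exists_isNestedNeighborhoodChain r hD (fun b => (hd b).ge) hdpos hdK
  refine ⟨ks ∘ Fin.val, Ns ∘ Fin.val, fun i j hij => Fin.ext (h.injOn i.2 j.2 hij),
    fun j => h.adj j j.2, fun i j hij => h.subset_of_le i j hij j.2, h.card_zero,
    fun j hj => ceil_natCast_mul_div_le (by omega) (h.card_le j hj j.2)⟩

/-- In a bi-regular bipartite graph with `K` left vertices of degree `D` and `F` right vertices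
of degree `d` (so `K·D = F·d`), there exist distinct left vertices `k_1, …, k_d` and nested sets
`N_1 ⊇ N_2 ⊇ ⋯ ⊇ N_d` of right vertices with `k_j` adjacent to every vertex of `N_j`, such that
`|N_1| = D` and `|N_j| ≥ ⌈(d − (j−1))·|N_{j−1}| / (K − (j−1))⌉` for `2 ≤ j ≤ d`. -/
theorem nested_neighborhoods_of_biregular (α β : Type*) [Fintype α] [Fintype β]
    (r : α → β → Prop) [∀ a b, Decidable (r a b)]
    (K F D d : ℕ) (hK : Fintype.card α = K) (hF : Fintype.card β = F)
    (hD : ∀ a : α, (Finset.univ.filter fun b => r a b).card = D)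
    (hd : ∀ b : β, (Finset.univ.filter fun a => r a b).card = d)
    (hedge : K * D = F * d) (hdpos : 0 < d) (hdK : d ≤ K) :
    ∃ (ks : Fin d → α) (Ns : Fin d → Finset β),
      Function.Injective ks ∧
      (∀ j : Fin d, ∀ b ∈ Ns j, r (ks j) b) ∧
      (∀ j j' : Fin d, j ≤ j' → Ns j' ⊆ Ns j) ∧
      (Ns ⟨0, hdpos⟩).card = D ∧
      (∀ j : Fin d, 0 < j.val →
        (⌈(((d - j.val : ℕ) : ℚ) *
              ((Ns ⟨j.val - 1, Nat.lt_of_le_of_lt (Nat.sub_le _ _) j.isLt⟩).card : ℚ)) /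
            ((K - j.val : ℕ) : ℚ)⌉ : ℤ) ≤ ((Ns j).card : ℤ)) :=
  nested_neighborhoods_of_biregular_general α β r K D d hK hD hd hdpos hdK
end
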